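/- Assume: (positivity) P(T=t, M=m, Z=z) > 0 for every t ∈ {0,1}, m ∈ 𝕄 and every z with P(Z=z) > 0; (i) cross-world independence: for all t, t' ∈ {0,1}, m, m' ∈ 𝕄 and z with P(Z=z) > 0, E[Y(t,m)·1{M(t')=m'} | Z=z] = E[Y(t,m) | Z=z] · P(M(t')=m' | Z=z); (ii) mediator ignorability: for all t, t' ∈ {0,1}, m ∈ 𝕄, v ∈ V and u, s with P(Z_TM=u, Z_MY=s) > 0, P(M(t)=m, T=t', Z_TY=v | Z_TM=u, Z_MY=s) = P(M(t)=m | Z_TM=u, Z_MY=s) · P(T=t', Z_TY=v | Z_TM=u, Z_MY=s); (iii) outcome ignorability: for all t, t' ∈ {0,1}, m, m' ∈ 𝕄, u ∈ U and v, s with P(Z_TY=v, Z_MY=s) > 0, E[Y(t,m)·1{T=t', M=m', Z_TM=u} | Z_TY=v, Z_MY=s] = E[Y(t,m) | Z_TY=v, Z_MY=s] · P(T=t', M=m', Z_TM=u | Z_TY=v, Z_MY=s). Then TE = ∑_{z=(u,v,s) : P(Z=z)>0} ∑_{m ∈ 𝕄} ( (E[Y | T=1, M=m, Z_TY=v, Z_MY=s]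 − E[Y | T=0, M=m, Z_TY=v, Z_MY=s]) · P(M=m | T=0, Z_TM=u, Z_MY=s) − E[Y | T=1, M=m, Z_TY=v, Z_MY=s] · (P(M=m | T=0, Z_TM=u, Z_MY=s) − P(M=m | T=1, Z_TM=u, Z_MY=s)) ) · P(Z=z). -/
import Mathlib


open Finset
open scoped Classical

/-- Probability of an event `A` under the finite distribution `p`. -/
noncomputable def Pr {Ω : Type*} [Fintype Ω] (p : Ω → ℝ) (A : Ω → Prop) : ℝ :=
  ∑ ω, if A ω then p ω else 0

/-- Expectation of a random variable `V` under the finite distribution `p`. -/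
noncomputable def Ex {Ω : Type*} [Fintype Ω] (p : Ω → ℝ) (V : Ω → ℝ) : ℝ :=
  ∑ ω, p ω * V ω

/-- Conditional probability `P(A | B) = P(A ∩ B) / P(B)`. -/
noncomputable def PrCond {Ω : Type*} [Fintype Ω] (p : Ω → ℝ) (A B : Ω → Prop) : ℝ :=
  Pr p (fun ω => A ω ∧ B ω) / Pr p B

/-- Conditional expectation `E[V | B] = E[V·1_B] / P(B)`. -/
noncomputable def ExCond {Ω : Type*} [Fintype Ω] (p : Ω → ℝ) (V : Ω → ℝ) (B : Ω → Prop) : ℝ :=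
  Ex p (fun ω => V ω * (if B ω then 1 else 0)) / Pr p B

section Helpers
variable {Ω : Type*} [Fintype Ω] (p : Ω → ℝ)

lemma Ex_congr {f g : Ω → ℝ} (h : ∀ ω, f ω = g ω) : Ex p f = Ex p g := by
  unfold Ex; exact Finset.sum_congr rfl fun ω _ => by rw [h ω]

lemma Pr_nonneg (hp : ∀ ω, 0 ≤ p ω) (A : Ω → Prop) : 0 ≤ Pr p A := by
  unfold Pr; exact Finset.sum_nonneg fun ω _ => by by_cases h : A ω <;> simp [h, hp ω]

lemma Pr_mono (hp : ∀ ω, 0 ≤ p ω) {A B : Ω → Prop} (h : ∀ ω, A ω → B ω) :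
    Pr p A ≤ Pr p B := by
  unfold Pr; refine Finset.sum_le_sum fun ω _ => ?_
  by_cases hA : A ω
  · simp [hA, h ω hA]
  · by_cases hB : B ω <;> simp [hA, hB, hp ω]

lemma Pr_pos_mono (hp : ∀ ω, 0 ≤ p ω) {A B : Ω → Prop} (h : ∀ ω, A ω → B ω)
    (hA : 0 < Pr p A) : 0 < Pr p B := lt_of_lt_of_le hA (Pr_mono p hp h)

lemma Ex_sum {ι : Type*} (s : Finset ι) (f : ι → Ω → ℝ) :
    ∑ i ∈ s, Ex p (f i) = Ex p (fun ω => ∑ i ∈ s, f i ω) := by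
  unfold Ex; rw [Finset.sum_comm]
  exact Finset.sum_congr rfl fun ω _ => by rw [Finset.mul_sum]

lemma Ex_sum_eq {ι : Type*} [Fintype ι] (f : ι → Ω → ℝ) (g : Ω → ℝ)
    (h : ∀ ω, ∑ i : ι, f i ω = g ω) :
    ∑ i : ι, Ex p (f i) = Ex p g := by
  rw [Ex_sum p Finset.univ f]; exact Ex_congr p h

lemma Pr_sum_eq {ι : Type*} [Fintype ι] (A : ι → Ω → Prop) (B : Ω → Prop)
    [instA : ∀ i ω, Decidable (A i ω)] [instB : ∀ ω, Decidable (B ω)]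
    (h : ∀ ω, ∑ i : ι, (if A i ω then (1:ℝ) else 0) = if B ω then 1 else 0) :
    ∑ i : ι, Pr p (A i) = Pr p B := by
  unfold Pr
  rw [Finset.sum_comm]
  refine Finset.sum_congr rfl fun ω _ => ?_
  trans (∑ i : ι, p ω * (if A i ω then (1:ℝ) else 0))
  · exact Finset.sum_congr rfl fun i _ => by by_cases hA : A i ω <;> simp [hA]
  · rw [← Finset.mul_sum, h ω]
    by_cases hB : B ω <;> simp [hB]

lemma Pr_zero_forall (hp : ∀ ω, 0 ≤ p ω) {B : Ω → Prop} (hB : Pr p B = 0) :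
    ∀ ω, B ω → p ω = 0 := by
  intro ω hBω
  have h := (Finset.sum_eq_zero_iff_of_nonneg
    (fun ω _ => by by_cases h : B ω <;> simp [h, hp ω])).mp hB ω (Finset.mem_univ ω)
  simpa [hBω] using h

lemma Ex_mul_ind_zero (hp : ∀ ω, 0 ≤ p ω) {B : Ω → Prop} [inst : ∀ ω, Decidable (B ω)]
    (hB : Pr p B = 0) (f : Ω → ℝ) :
    Ex p (fun ω => f ω * if B ω then 1 else 0) = 0 := by
  unfold Ex; refine Finset.sum_eq_zero fun ω _ => ?_
  by_cases h : B ω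
  · simp [Pr_zero_forall p hp hB ω h]
  · simp [h]

lemma ExCond_mul_Pr {B : Ω → Prop} [inst : ∀ ω, Decidable (B ω)]
    (hB : Pr p B ≠ 0) (f : Ω → ℝ) :
    ExCond p f B * Pr p B = Ex p (fun ω => f ω * if B ω then 1 else 0) := by
  unfold ExCond
  rw [div_mul_cancel₀ _ hB]
  exact Ex_congr p fun ω => by by_cases h : B ω <;> simp [h]

lemma PrCond_mul_Pr {A B : Ω → Prop} (hB : Pr p B ≠ 0) :
    PrCond p A B * Pr p B = Pr p (fun ω => A ω ∧ B ω) :=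
  div_mul_cancel₀ _ hB

end Helpers

lemma ind_and (P Q : Prop) [Decidable P] [Decidable Q] [Decidable (P ∧ Q)] :
    (if P ∧ Q then (1:ℝ) else 0) = (if P then 1 else 0) * (if Q then 1 else 0) := by
  by_cases hP : P <;> by_cases hQ : Q <;> simp [hP, hQ]

lemma sum_ind_fiber1 {α : Type*} [Fintype α] (x : α) (Q : Prop)
    [Decidable Q] [∀ a : α, Decidable (x = a ∧ Q)] :
    ∑ a : α, (if x = a ∧ Q then (1:ℝ) else 0) = if Q then 1 else 0 := by
  by_cases hQ : Q <;> simp [hQ, Finset.sum_ite_eq]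

lemma sum_ind_fiber2 {α : Type*} [Fintype α] (x : α) (P Q : Prop)
    [Decidable P] [Decidable Q] [Decidable (P ∧ Q)] [∀ a : α, Decidable (P ∧ x = a ∧ Q)] :
    ∑ a : α, (if P ∧ x = a ∧ Q then (1:ℝ) else 0) = if P ∧ Q then 1 else 0 := by
  by_cases hP : P <;> by_cases hQ : Q <;> simp [hP, hQ, Finset.sum_ite_eq]

lemma sum_ind_fiber2' {α : Type*} [Fintype α] (x : α) (P : Prop)
    [Decidable P] [∀ a : α, Decidable (P ∧ x = a)] :
    ∑ a : α, (if P ∧ x = a then (1:ℝ) else 0) = if P then 1 else 0 := by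
  by_cases hP : P <;> simp [hP, Finset.sum_ite_eq]

lemma sum_ind_fiber3 {α : Type*} [Fintype α] (x : α) (P Q : Prop)
    [Decidable P] [Decidable Q] [Decidable (P ∧ Q)] [∀ a : α, Decidable (P ∧ Q ∧ x = a)] :
    ∑ a : α, (if P ∧ Q ∧ x = a then (1:ℝ) else 0) = if P ∧ Q then 1 else 0 := by
  by_cases hP : P <;> by_cases hQ : Q <;> simp [hP, hQ, Finset.sum_ite_eq]

lemma sum_ind_pair {α β : Type*} [Fintype α] [Fintype β] (x : α) (y : β) (P : Prop)
    [Decidable P] [∀ q : α × β, Decidable (x = q.1 ∧ y = q.2 ∧ P)] :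
    ∑ q : α × β, (if x = q.1 ∧ y = q.2 ∧ P then (1:ℝ) else 0) = if P then 1 else 0 := by
  rw [Fintype.sum_prod_type]
  trans (∑ a : α, (if x = a ∧ P then (1:ℝ) else 0))
  · refine Finset.sum_congr rfl fun a _ => ?_
    trans (∑ b : β, (if x = a ∧ y = b ∧ P then (1:ℝ) else 0))
    · exact Finset.sum_congr rfl fun b _ => by
        by_cases h1 : x = a <;> by_cases h2 : y = b <;> by_cases h3 : P <;> simp [h1, h2, h3]
    · exact sum_ind_fiber2 y (x = a) P
  · exact sum_ind_fiber1 x P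

lemma sum_ind_mul {ι : Type*} [Fintype ι] {c : ι → Prop} {B : Prop} (r : ℝ)
    [∀ i, Decidable (c i)] [Decidable B]
    (h : ∑ i : ι, (if c i then (1:ℝ) else 0) = if B then 1 else 0) :
    ∑ i : ι, (if c i then (1:ℝ) else 0) * r = (if B then 1 else 0) * r := by
  rw [← Finset.sum_mul, h]

lemma key {Ω 𝕄 U V S : Type*}
    [Fintype Ω] [Fintype 𝕄] [Fintype U] [Fintype V] [Fintype S]
    (p : Ω → ℝ) (hp : ∀ ω, 0 ≤ p ω)
    (T : Ω → Fin 2) (M : Fin 2 → Ω → 𝕄) (Y : Fin 2 → 𝕄 → Ω → ℝ)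
    (ZTM : Ω → U) (ZTY : Ω → V) (ZMY : Ω → S)
    (hpos : ∀ (t : Fin 2) (m : 𝕄) (z : U × V × S),
      0 < Pr p (fun ω => (ZTM ω, ZTY ω, ZMY ω) = z) →
      0 < Pr p (fun ω => T ω = t ∧ M (T ω) ω = m ∧ (ZTM ω, ZTY ω, ZMY ω) = z))
    (hCW : ∀ (t t' : Fin 2) (m m' : 𝕄) (z : U × V × S),
      0 < Pr p (fun ω => (ZTM ω, ZTY ω, ZMY ω) = z) →
      ExCond p (fun ω => Y t m ω * (if M t' ω = m' then 1 else 0))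
          (fun ω => (ZTM ω, ZTY ω, ZMY ω) = z) =
        ExCond p (fun ω => Y t m ω) (fun ω => (ZTM ω, ZTY ω, ZMY ω) = z) *
          PrCond p (fun ω => M t' ω = m') (fun ω => (ZTM ω, ZTY ω, ZMY ω) = z))
    (hMed : ∀ (t t' : Fin 2) (m : 𝕄) (v : V) (u : U) (s : S),
      0 < Pr p (fun ω => ZTM ω = u ∧ ZMY ω = s) →
      PrCond p (fun ω => M t ω = m ∧ T ω = t' ∧ ZTY ω = v)
          (fun ω => ZTM ω = u ∧ ZMY ω = s) =
        PrCond p (fun ω => M t ω = m) (fun ω => ZTM ω = u ∧ ZMY ω = s) *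
          PrCond p (fun ω => T ω = t' ∧ ZTY ω = v) (fun ω => ZTM ω = u ∧ ZMY ω = s))
    (hOut : ∀ (t t' : Fin 2) (m m' : 𝕄) (u : U) (v : V) (s : S),
      0 < Pr p (fun ω => ZTY ω = v ∧ ZMY ω = s) →
      ExCond p
          (fun ω => Y t m ω * (if T ω = t' ∧ M (T ω) ω = m' ∧ ZTM ω = u then 1 else 0))
          (fun ω => ZTY ω = v ∧ ZMY ω = s) =
        ExCond p (fun ω => Y t m ω) (fun ω => ZTY ω = v ∧ ZMY ω = s) *
          PrCond p (fun ω => T ω = t' ∧ M (T ω) ω = m' ∧ ZTM ω = u)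
            (fun ω => ZTY ω = v ∧ ZMY ω = s))
    (t : Fin 2) :
    Ex p (fun ω => Y t (M t ω) ω) =
      ∑ z ∈ Finset.univ.filter
          (fun z : U × V × S => 0 < Pr p (fun ω => (ZTM ω, ZTY ω, ZMY ω) = z)),
        ∑ m : 𝕄,
          ExCond p (fun ω => Y (T ω) (M (T ω) ω) ω)
              (fun ω => T ω = t ∧ M (T ω) ω = m ∧ ZTY ω = z.2.1 ∧ ZMY ω = z.2.2) *
            PrCond p (fun ω => M (T ω) ω = m)
              (fun ω => T ω = t ∧ ZTM ω = z.1 ∧ ZMY ω = z.2.2) *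
            Pr p (fun ω => (ZTM ω, ZTY ω, ZMY ω) = z) := by
  classical
  -- Step 1: partition over values of Z
  have hpart : Ex p (fun ω => Y t (M t ω) ω) =
      ∑ z : U × V × S, Ex p (fun ω => Y t (M t ω) ω *
        if (ZTM ω, ZTY ω, ZMY ω) = z then 1 else 0) := by
    refine (Ex_sum_eq p _ _ fun ω => ?_).symm
    rw [← Finset.mul_sum]
    simp [Finset.sum_ite_eq]
  rw [hpart, ← Finset.sum_filter_add_sum_filter_not Finset.univ
    (fun z : U × V × S => 0 < Pr p (fun ω => (ZTM ω, ZTY ω, ZMY ω) = z))]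
  have hzero : ∑ z ∈ Finset.univ.filter
      (fun z : U × V × S => ¬ 0 < Pr p (fun ω => (ZTM ω, ZTY ω, ZMY ω) = z)),
      Ex p (fun ω => Y t (M t ω) ω *
        if (ZTM ω, ZTY ω, ZMY ω) = z then 1 else 0) = 0 := by
    refine Finset.sum_eq_zero fun z hz => ?_
    have h0 : Pr p (fun ω => (ZTM ω, ZTY ω, ZMY ω) = z) = 0 :=
      le_antisymm (not_lt.mp (Finset.mem_filter.mp hz).2) (Pr_nonneg p hp _)
    exact Ex_mul_ind_zero p hp h0 _
  rw [hzero, add_zero]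
  refine Finset.sum_congr rfl fun z hz => ?_
  obtain ⟨u, v, s⟩ := z
  have hzpos : 0 < Pr p (fun ω => (ZTM ω, ZTY ω, ZMY ω) = (u, v, s)) :=
    (Finset.mem_filter.mp hz).2
  have hZ : Pr p (fun ω => (ZTM ω, ZTY ω, ZMY ω) = (u, v, s)) ≠ 0 := ne_of_gt hzpos
  have hZiff : ∀ (ω : Ω) (u' : U) (v' : V) (s' : S),
      (ZTM ω, ZTY ω, ZMY ω) = (u', v', s') ↔
        (ZTM ω = u' ∧ ZTY ω = v' ∧ ZMY ω = s') := by
    intro ω u' v' s'; simp [Prod.ext_iff]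
  have hvs : 0 < Pr p (fun ω => ZTY ω = v ∧ ZMY ω = s) :=
    Pr_pos_mono p hp
      (fun ω h => ⟨((hZiff ω u v s).mp h).2.1, ((hZiff ω u v s).mp h).2.2⟩) hzpos
  have hvsne : Pr p (fun ω => ZTY ω = v ∧ ZMY ω = s) ≠ 0 := ne_of_gt hvs
  have hus : 0 < Pr p (fun ω => ZTM ω = u ∧ ZMY ω = s) :=
    Pr_pos_mono p hp
      (fun ω h => ⟨((hZiff ω u v s).mp h).1, ((hZiff ω u v s).mp h).2.2⟩) hzpos
  have husne : Pr p (fun ω => ZTM ω = u ∧ ZMY ω = s) ≠ 0 := ne_of_gt hus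
  -- decompositions of the marginal events into Z-cells
  have hVSsum : ∑ u' : U, Pr p (fun ω => (ZTM ω, ZTY ω, ZMY ω) = (u', v, s)) =
      Pr p (fun ω => ZTY ω = v ∧ ZMY ω = s) := by
    refine Pr_sum_eq p _ _ fun ω => ?_
    by_cases h2 : ZTY ω = v <;> by_cases h4 : ZMY ω = s <;>
      simp [h2, h4, Prod.ext_iff, Finset.sum_ite_eq]
  have hUSsum : ∑ v' : V, Pr p (fun ω => (ZTM ω, ZTY ω, ZMY ω) = (u, v', s)) =
      Pr p (fun ω => ZTM ω = u ∧ ZMY ω = s) := by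
    refine Pr_sum_eq p _ _ fun ω => ?_
    by_cases h1 : ZTM ω = u <;> by_cases h4 : ZMY ω = s <;>
      simp [h1, h4, Prod.ext_iff, Finset.sum_ite_eq]
  have hex_vs : ∃ u0 : U, 0 < Pr p (fun ω => (ZTM ω, ZTY ω, ZMY ω) = (u0, v, s)) := by
    by_contra hcon
    push_neg at hcon
    have hle : Pr p (fun ω => ZTY ω = v ∧ ZMY ω = s) ≤ 0 := by
      rw [← hVSsum]; exact Finset.sum_nonpos fun u' _ => hcon u'
    exact absurd hvs (not_lt.mpr hle)
  have hex_us : ∃ v0 : V, 0 < Pr p (fun ω => (ZTM ω, ZTY ω, ZMY ω) = (u, v0, s)) := by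
    by_contra hcon
    push_neg at hcon
    have hle : Pr p (fun ω => ZTM ω = u ∧ ZMY ω = s) ≤ 0 := by
      rw [← hUSsum]; exact Finset.sum_nonpos fun v' _ => hcon v'
    exact absurd hus (not_lt.mpr hle)
  -- nonemptiness of Ω, positivity of the observed-data events
  have hOmega : Nonempty Ω := by
    by_contra hne
    rw [not_nonempty_iff] at hne
    have h0 : Pr p (fun ω => (ZTM ω, ZTY ω, ZMY ω) = (u, v, s)) = 0 := by
      unfold Pr; simp
    rw [h0] at hzpos; exact lt_irrefl 0 hzpos
  obtain ⟨ω0⟩ := hOmega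
  have hTm : ∀ m : 𝕄,
      0 < Pr p (fun ω => T ω = t ∧ M (T ω) ω = m ∧ ZTY ω = v ∧ ZMY ω = s) := by
    intro m
    obtain ⟨u0, hu0⟩ := hex_vs
    refine Pr_pos_mono p hp ?_ (hpos t m (u0, v, s) hu0)
    intro ω h
    obtain ⟨h1, h2, h3⟩ := h
    have h4 := (hZiff ω u0 v s).mp h3
    exact ⟨h1, h2, h4.2.1, h4.2.2⟩
  have hTt : 0 < Pr p (fun ω => T ω = t ∧ ZTM ω = u ∧ ZMY ω = s) := by
    obtain ⟨v0, hv0⟩ := hex_us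
    refine Pr_pos_mono p hp ?_ (hpos t (M t ω0) (u, v0, s) hv0)
    intro ω h
    obtain ⟨h1, _, h3⟩ := h
    have h4 := (hZiff ω u v0 s).mp h3
    exact ⟨h1, h4.1, h4.2.2⟩
  have hTtne : Pr p (fun ω => T ω = t ∧ ZTM ω = u ∧ ZMY ω = s) ≠ 0 := ne_of_gt hTt
  -- L3 : condition the counterfactual outcome on (ZTY, ZMY) only
  have hL3 : ∀ m : 𝕄,
      ExCond p (fun ω => Y t m ω) (fun ω => (ZTM ω, ZTY ω, ZMY ω) = (u, v, s)) =
      ExCond p (fun ω => Y t m ω) (fun ω => ZTY ω = v ∧ ZMY ω = s) := by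
    intro m
    have hfact : ∀ q : Fin 2 × 𝕄,
        Ex p (fun ω => (Y t m ω * if T ω = q.1 ∧ M (T ω) ω = q.2 ∧ ZTM ω = u then 1 else 0) *
          if ZTY ω = v ∧ ZMY ω = s then 1 else 0) =
        ExCond p (fun ω => Y t m ω) (fun ω => ZTY ω = v ∧ ZMY ω = s) *
          Pr p (fun ω => (T ω = q.1 ∧ M (T ω) ω = q.2 ∧ ZTM ω = u) ∧
            (ZTY ω = v ∧ ZMY ω = s)) := by
      intro q
      calc Ex p (fun ω => (Y t m ω *
              if T ω = q.1 ∧ M (T ω) ω = q.2 ∧ ZTM ω = u then 1 else 0) *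
              if ZTY ω = v ∧ ZMY ω = s then 1 else 0)
          = ExCond p (fun ω => Y t m ω *
                (if T ω = q.1 ∧ M (T ω) ω = q.2 ∧ ZTM ω = u then 1 else 0))
              (fun ω => ZTY ω = v ∧ ZMY ω = s) *
              Pr p (fun ω => ZTY ω = v ∧ ZMY ω = s) :=
            (ExCond_mul_Pr p hvsne _).symm
        _ = ExCond p (fun ω => Y t m ω) (fun ω => ZTY ω = v ∧ ZMY ω = s) *
              PrCond p (fun ω => T ω = q.1 ∧ M (T ω) ω = q.2 ∧ ZTM ω = u)
                (fun ω => ZTY ω = v ∧ ZMY ω = s) *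
              Pr p (fun ω => ZTY ω = v ∧ ZMY ω = s) := by
            rw [hOut t q.1 m q.2 u v s hvs]
        _ = _ := by rw [mul_assoc, PrCond_mul_Pr p hvsne]
    have hsumL : ∑ q : Fin 2 × 𝕄,
        Ex p (fun ω => (Y t m ω * if T ω = q.1 ∧ M (T ω) ω = q.2 ∧ ZTM ω = u then 1 else 0) *
          if ZTY ω = v ∧ ZMY ω = s then 1 else 0) =
        Ex p (fun ω => Y t m ω * if (ZTM ω, ZTY ω, ZMY ω) = (u, v, s) then 1 else 0) := by
      refine Ex_sum_eq p _ _ fun ω => ?_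
      calc ∑ q : Fin 2 × 𝕄,
            (Y t m ω * if T ω = q.1 ∧ M (T ω) ω = q.2 ∧ ZTM ω = u then (1:ℝ) else 0) *
              (if ZTY ω = v ∧ ZMY ω = s then (1:ℝ) else 0)
          = ∑ q : Fin 2 × 𝕄,
              (if T ω = q.1 ∧ M (T ω) ω = q.2 ∧ ZTM ω = u then (1:ℝ) else 0) *
                (Y t m ω * if ZTY ω = v ∧ ZMY ω = s then (1:ℝ) else 0) :=
            Finset.sum_congr rfl fun q _ => by ring
        _ = (if ZTM ω = u then (1:ℝ) else 0) *
              (Y t m ω * if ZTY ω = v ∧ ZMY ω = s then (1:ℝ) else 0) :=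
            sum_ind_mul _ (sum_ind_pair (T ω) (M (T ω) ω) (ZTM ω = u))
        _ = Y t m ω * if (ZTM ω, ZTY ω, ZMY ω) = (u, v, s) then (1:ℝ) else 0 := by
            by_cases h1 : ZTM ω = u <;> by_cases h2 : ZTY ω = v <;> by_cases h3 : ZMY ω = s <;>
              simp [h1, h2, h3, Prod.ext_iff]
    have hsumR : ∑ q : Fin 2 × 𝕄,
        Pr p (fun ω => (T ω = q.1 ∧ M (T ω) ω = q.2 ∧ ZTM ω = u) ∧
          (ZTY ω = v ∧ ZMY ω = s)) =
        Pr p (fun ω => (ZTM ω, ZTY ω, ZMY ω) = (u, v, s)) := by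
      refine Pr_sum_eq p _ _ fun ω => ?_
      calc ∑ q : Fin 2 × 𝕄,
            (if (T ω = q.1 ∧ M (T ω) ω = q.2 ∧ ZTM ω = u) ∧
              (ZTY ω = v ∧ ZMY ω = s) then (1:ℝ) else 0)
          = ∑ q : Fin 2 × 𝕄,
              (if T ω = q.1 ∧ M (T ω) ω = q.2 ∧ ZTM ω = u then (1:ℝ) else 0) *
                (if ZTY ω = v ∧ ZMY ω = s then (1:ℝ) else 0) :=
            Finset.sum_congr rfl fun q _ => ind_and _ _
        _ = (if ZTM ω = u then (1:ℝ) else 0) *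
              (if ZTY ω = v ∧ ZMY ω = s then (1:ℝ) else 0) :=
            sum_ind_mul _ (sum_ind_pair (T ω) (M (T ω) ω) (ZTM ω = u))
        _ = if (ZTM ω, ZTY ω, ZMY ω) = (u, v, s) then (1:ℝ) else 0 := by
            by_cases h1 : ZTM ω = u <;> by_cases h2 : ZTY ω = v <;> by_cases h3 : ZMY ω = s <;>
              simp [h1, h2, h3, Prod.ext_iff]
    have hcomb : Ex p (fun ω => Y t m ω *
          if (ZTM ω, ZTY ω, ZMY ω) = (u, v, s) then 1 else 0) =
        ExCond p (fun ω => Y t m ω) (fun ω => ZTY ω = v ∧ ZMY ω = s) *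
          Pr p (fun ω => (ZTM ω, ZTY ω, ZMY ω) = (u, v, s)) := by
      rw [← hsumL, Finset.sum_congr rfl fun q _ => hfact q, ← Finset.mul_sum, hsumR]
    have hfin : ExCond p (fun ω => Y t m ω)
          (fun ω => (ZTM ω, ZTY ω, ZMY ω) = (u, v, s)) *
          Pr p (fun ω => (ZTM ω, ZTY ω, ZMY ω) = (u, v, s)) =
        ExCond p (fun ω => Y t m ω) (fun ω => ZTY ω = v ∧ ZMY ω = s) *
          Pr p (fun ω => (ZTM ω, ZTY ω, ZMY ω) = (u, v, s)) := by
      rw [ExCond_mul_Pr p hZ]; exact hcomb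
    exact mul_right_cancel₀ hZ hfin
  -- L4 : identify the counterfactual-outcome conditional with the observed one
  have hL4 : ∀ m : 𝕄,
      ExCond p (fun ω => Y t m ω) (fun ω => ZTY ω = v ∧ ZMY ω = s) =
      ExCond p (fun ω => Y (T ω) (M (T ω) ω) ω)
        (fun ω => T ω = t ∧ M (T ω) ω = m ∧ ZTY ω = v ∧ ZMY ω = s) := by
    intro m
    have hTmne : Pr p (fun ω => T ω = t ∧ M (T ω) ω = m ∧ ZTY ω = v ∧ ZMY ω = s) ≠ 0 :=
      ne_of_gt (hTm m)
    have hfact : ∀ u' : U,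
        Ex p (fun ω => (Y t m ω * if T ω = t ∧ M (T ω) ω = m ∧ ZTM ω = u' then 1 else 0) *
          if ZTY ω = v ∧ ZMY ω = s then 1 else 0) =
        ExCond p (fun ω => Y t m ω) (fun ω => ZTY ω = v ∧ ZMY ω = s) *
          Pr p (fun ω => (T ω = t ∧ M (T ω) ω = m ∧ ZTM ω = u') ∧
            (ZTY ω = v ∧ ZMY ω = s)) := by
      intro u'
      calc Ex p (fun ω => (Y t m ω *
              if T ω = t ∧ M (T ω) ω = m ∧ ZTM ω = u' then 1 else 0) *
              if ZTY ω = v ∧ ZMY ω = s then 1 else 0)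
          = ExCond p (fun ω => Y t m ω *
                (if T ω = t ∧ M (T ω) ω = m ∧ ZTM ω = u' then 1 else 0))
              (fun ω => ZTY ω = v ∧ ZMY ω = s) *
              Pr p (fun ω => ZTY ω = v ∧ ZMY ω = s) :=
            (ExCond_mul_Pr p hvsne _).symm
        _ = ExCond p (fun ω => Y t m ω) (fun ω => ZTY ω = v ∧ ZMY ω = s) *
              PrCond p (fun ω => T ω = t ∧ M (T ω) ω = m ∧ ZTM ω = u')
                (fun ω => ZTY ω = v ∧ ZMY ω = s) *
              Pr p (fun ω => ZTY ω = v ∧ ZMY ω = s) := by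
            rw [hOut t t m m u' v s hvs]
        _ = _ := by rw [mul_assoc, PrCond_mul_Pr p hvsne]
    have hsumL : ∑ u' : U,
        Ex p (fun ω => (Y t m ω * if T ω = t ∧ M (T ω) ω = m ∧ ZTM ω = u' then 1 else 0) *
          if ZTY ω = v ∧ ZMY ω = s then 1 else 0) =
        Ex p (fun ω => Y (T ω) (M (T ω) ω) ω *
          if T ω = t ∧ M (T ω) ω = m ∧ ZTY ω = v ∧ ZMY ω = s then 1 else 0) := by
      refine Ex_sum_eq p _ _ fun ω => ?_
      calc ∑ u' : U,
            (Y t m ω * if T ω = t ∧ M (T ω) ω = m ∧ ZTM ω = u' then (1:ℝ) else 0) *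
              (if ZTY ω = v ∧ ZMY ω = s then (1:ℝ) else 0)
          = ∑ u' : U,
              (if T ω = t ∧ M (T ω) ω = m ∧ ZTM ω = u' then (1:ℝ) else 0) *
                (Y t m ω * if ZTY ω = v ∧ ZMY ω = s then (1:ℝ) else 0) :=
            Finset.sum_congr rfl fun u' _ => by ring
        _ = (if T ω = t ∧ M (T ω) ω = m then (1:ℝ) else 0) *
              (Y t m ω * if ZTY ω = v ∧ ZMY ω = s then (1:ℝ) else 0) :=
            sum_ind_mul _ (sum_ind_fiber3 (ZTM ω) (T ω = t) (M (T ω) ω = m))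
        _ = Y (T ω) (M (T ω) ω) ω *
              if T ω = t ∧ M (T ω) ω = m ∧ ZTY ω = v ∧ ZMY ω = s then (1:ℝ) else 0 := by
            by_cases h1 : T ω = t
            · by_cases h2 : M (T ω) ω = m
              · have hY : Y (T ω) (M (T ω) ω) ω = Y t m ω := by rw [h2, h1]
                have h2' : M t ω = m := by rw [← h1]; exact h2
                rw [hY]
                simp [h1, h2, h2']
              · simp [h2]
            · simp [h1]
    have hsumR : ∑ u' : U,
        Pr p (fun ω => (T ω = t ∧ M (T ω) ω = m ∧ ZTM ω = u') ∧
          (ZTY ω = v ∧ ZMY ω = s)) =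
        Pr p (fun ω => T ω = t ∧ M (T ω) ω = m ∧ ZTY ω = v ∧ ZMY ω = s) := by
      refine Pr_sum_eq p _ _ fun ω => ?_
      calc ∑ u' : U,
            (if (T ω = t ∧ M (T ω) ω = m ∧ ZTM ω = u') ∧
              (ZTY ω = v ∧ ZMY ω = s) then (1:ℝ) else 0)
          = ∑ u' : U,
              (if T ω = t ∧ M (T ω) ω = m ∧ ZTM ω = u' then (1:ℝ) else 0) *
                (if ZTY ω = v ∧ ZMY ω = s then (1:ℝ) else 0) :=
            Finset.sum_congr rfl fun u' _ => ind_and _ _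
        _ = (if T ω = t ∧ M (T ω) ω = m then (1:ℝ) else 0) *
              (if ZTY ω = v ∧ ZMY ω = s then (1:ℝ) else 0) :=
            sum_ind_mul _ (sum_ind_fiber3 (ZTM ω) (T ω = t) (M (T ω) ω = m))
        _ = if T ω = t ∧ M (T ω) ω = m ∧ ZTY ω = v ∧ ZMY ω = s then (1:ℝ) else 0 := by
            by_cases h1 : T ω = t <;> by_cases h2 : M (T ω) ω = m <;>
              by_cases h3 : ZTY ω = v <;> by_cases h4 : ZMY ω = s <;>
              simp [h1, h2, h3, h4]
    have hcomb : Ex p (fun ω => Y (T ω) (M (T ω) ω) ω *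
          if T ω = t ∧ M (T ω) ω = m ∧ ZTY ω = v ∧ ZMY ω = s then 1 else 0) =
        ExCond p (fun ω => Y t m ω) (fun ω => ZTY ω = v ∧ ZMY ω = s) *
          Pr p (fun ω => T ω = t ∧ M (T ω) ω = m ∧ ZTY ω = v ∧ ZMY ω = s) := by
      rw [← hsumL, Finset.sum_congr rfl fun u' _ => hfact u', ← Finset.mul_sum, hsumR]
    have hfin : ExCond p (fun ω => Y (T ω) (M (T ω) ω) ω)
          (fun ω => T ω = t ∧ M (T ω) ω = m ∧ ZTY ω = v ∧ ZMY ω = s) *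
          Pr p (fun ω => T ω = t ∧ M (T ω) ω = m ∧ ZTY ω = v ∧ ZMY ω = s) =
        ExCond p (fun ω => Y t m ω) (fun ω => ZTY ω = v ∧ ZMY ω = s) *
          Pr p (fun ω => T ω = t ∧ M (T ω) ω = m ∧ ZTY ω = v ∧ ZMY ω = s) := by
      rw [ExCond_mul_Pr p hTmne]; exact hcomb
    exact (mul_right_cancel₀ hTmne hfin).symm
  -- L5 : condition the potential mediator on (ZTM, ZMY) only
  have hL5 : ∀ m : 𝕄,
      PrCond p (fun ω => M t ω = m) (fun ω => (ZTM ω, ZTY ω, ZMY ω) = (u, v, s)) =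
      PrCond p (fun ω => M t ω = m) (fun ω => ZTM ω = u ∧ ZMY ω = s) := by
    intro m
    have hfact : ∀ t' : Fin 2,
        Pr p (fun ω => (M t ω = m ∧ T ω = t' ∧ ZTY ω = v) ∧ (ZTM ω = u ∧ ZMY ω = s)) =
        PrCond p (fun ω => M t ω = m) (fun ω => ZTM ω = u ∧ ZMY ω = s) *
          Pr p (fun ω => (T ω = t' ∧ ZTY ω = v) ∧ (ZTM ω = u ∧ ZMY ω = s)) := by
      intro t'
      calc Pr p (fun ω => (M t ω = m ∧ T ω = t' ∧ ZTY ω = v) ∧ (ZTM ω = u ∧ ZMY ω = s))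
          = PrCond p (fun ω => M t ω = m ∧ T ω = t' ∧ ZTY ω = v)
              (fun ω => ZTM ω = u ∧ ZMY ω = s) *
              Pr p (fun ω => ZTM ω = u ∧ ZMY ω = s) :=
            (PrCond_mul_Pr p husne).symm
        _ = PrCond p (fun ω => M t ω = m) (fun ω => ZTM ω = u ∧ ZMY ω = s) *
              PrCond p (fun ω => T ω = t' ∧ ZTY ω = v)
                (fun ω => ZTM ω = u ∧ ZMY ω = s) *
              Pr p (fun ω => ZTM ω = u ∧ ZMY ω = s) := by
            rw [hMed t t' m v u s hus]
        _ = _ := by rw [mul_assoc, PrCond_mul_Pr p husne]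
    have hsumL : ∑ t' : Fin 2,
        Pr p (fun ω => (M t ω = m ∧ T ω = t' ∧ ZTY ω = v) ∧ (ZTM ω = u ∧ ZMY ω = s)) =
        Pr p (fun ω => M t ω = m ∧ (ZTM ω, ZTY ω, ZMY ω) = (u, v, s)) := by
      refine Pr_sum_eq p _ _ fun ω => ?_
      calc ∑ t' : Fin 2,
            (if (M t ω = m ∧ T ω = t' ∧ ZTY ω = v) ∧ (ZTM ω = u ∧ ZMY ω = s)
              then (1:ℝ) else 0)
          = ∑ t' : Fin 2,
              (if M t ω = m ∧ T ω = t' ∧ (ZTY ω = v ∧ ZTM ω = u ∧ ZMY ω = s)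
                then (1:ℝ) else 0) :=
            Finset.sum_congr rfl fun t' _ => by refine if_congr ?_ rfl rfl; tauto
        _ = if M t ω = m ∧ (ZTY ω = v ∧ ZTM ω = u ∧ ZMY ω = s) then (1:ℝ) else 0 :=
            sum_ind_fiber2 (T ω) _ _
        _ = if M t ω = m ∧ (ZTM ω, ZTY ω, ZMY ω) = (u, v, s) then (1:ℝ) else 0 := by
            refine if_congr ?_ rfl rfl
            rw [hZiff ω u v s]; tauto
    have hsumR : ∑ t' : Fin 2,
        Pr p (fun ω => (T ω = t' ∧ ZTY ω = v) ∧ (ZTM ω = u ∧ ZMY ω = s)) =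
        Pr p (fun ω => (ZTM ω, ZTY ω, ZMY ω) = (u, v, s)) := by
      refine Pr_sum_eq p _ _ fun ω => ?_
      calc ∑ t' : Fin 2,
            (if (T ω = t' ∧ ZTY ω = v) ∧ (ZTM ω = u ∧ ZMY ω = s) then (1:ℝ) else 0)
          = ∑ t' : Fin 2,
              (if T ω = t' ∧ (ZTY ω = v ∧ ZTM ω = u ∧ ZMY ω = s) then (1:ℝ) else 0) :=
            Finset.sum_congr rfl fun t' _ => by refine if_congr ?_ rfl rfl; tauto
        _ = if ZTY ω = v ∧ ZTM ω = u ∧ ZMY ω = s then (1:ℝ) else 0 :=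
            sum_ind_fiber1 (T ω) _
        _ = if (ZTM ω, ZTY ω, ZMY ω) = (u, v, s) then (1:ℝ) else 0 := by
            refine if_congr ?_ rfl rfl
            rw [hZiff ω u v s]; tauto
    have hcomb : Pr p (fun ω => M t ω = m ∧ (ZTM ω, ZTY ω, ZMY ω) = (u, v, s)) =
        PrCond p (fun ω => M t ω = m) (fun ω => ZTM ω = u ∧ ZMY ω = s) *
          Pr p (fun ω => (ZTM ω, ZTY ω, ZMY ω) = (u, v, s)) := by
      rw [← hsumL, Finset.sum_congr rfl fun t' _ => hfact t', ← Finset.mul_sum, hsumR]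
    have hfin : PrCond p (fun ω => M t ω = m)
          (fun ω => (ZTM ω, ZTY ω, ZMY ω) = (u, v, s)) *
          Pr p (fun ω => (ZTM ω, ZTY ω, ZMY ω) = (u, v, s)) =
        PrCond p (fun ω => M t ω = m) (fun ω => ZTM ω = u ∧ ZMY ω = s) *
          Pr p (fun ω => (ZTM ω, ZTY ω, ZMY ω) = (u, v, s)) := by
      rw [PrCond_mul_Pr p hZ]; exact hcomb
    exact mul_right_cancel₀ hZ hfin
  -- L6 : identify the potential-mediator conditional with the observed one
  have hL6 : ∀ m : 𝕄,
      PrCond p (fun ω => M t ω = m) (fun ω => ZTM ω = u ∧ ZMY ω = s) =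
      PrCond p (fun ω => M (T ω) ω = m) (fun ω => T ω = t ∧ ZTM ω = u ∧ ZMY ω = s) := by
    intro m
    have hfact : ∀ v' : V,
        Pr p (fun ω => (M t ω = m ∧ T ω = t ∧ ZTY ω = v') ∧ (ZTM ω = u ∧ ZMY ω = s)) =
        PrCond p (fun ω => M t ω = m) (fun ω => ZTM ω = u ∧ ZMY ω = s) *
          Pr p (fun ω => (T ω = t ∧ ZTY ω = v') ∧ (ZTM ω = u ∧ ZMY ω = s)) := by
      intro v'
      calc Pr p (fun ω => (M t ω = m ∧ T ω = t ∧ ZTY ω = v') ∧ (ZTM ω = u ∧ ZMY ω = s))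
          = PrCond p (fun ω => M t ω = m ∧ T ω = t ∧ ZTY ω = v')
              (fun ω => ZTM ω = u ∧ ZMY ω = s) *
              Pr p (fun ω => ZTM ω = u ∧ ZMY ω = s) :=
            (PrCond_mul_Pr p husne).symm
        _ = PrCond p (fun ω => M t ω = m) (fun ω => ZTM ω = u ∧ ZMY ω = s) *
              PrCond p (fun ω => T ω = t ∧ ZTY ω = v')
                (fun ω => ZTM ω = u ∧ ZMY ω = s) *
              Pr p (fun ω => ZTM ω = u ∧ ZMY ω = s) := by
            rw [hMed t t m v' u s hus]
        _ = _ := by rw [mul_assoc, PrCond_mul_Pr p husne]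
    have hsumL : ∑ v' : V,
        Pr p (fun ω => (M t ω = m ∧ T ω = t ∧ ZTY ω = v') ∧ (ZTM ω = u ∧ ZMY ω = s)) =
        Pr p (fun ω => M (T ω) ω = m ∧ (T ω = t ∧ ZTM ω = u ∧ ZMY ω = s)) := by
      refine Pr_sum_eq p _ _ fun ω => ?_
      calc ∑ v' : V,
            (if (M t ω = m ∧ T ω = t ∧ ZTY ω = v') ∧ (ZTM ω = u ∧ ZMY ω = s)
              then (1:ℝ) else 0)
          = ∑ v' : V,
              (if (M t ω = m ∧ T ω = t ∧ ZTM ω = u ∧ ZMY ω = s) ∧ ZTY ω = v'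
                then (1:ℝ) else 0) :=
            Finset.sum_congr rfl fun v' _ => by refine if_congr ?_ rfl rfl; tauto
        _ = if M t ω = m ∧ T ω = t ∧ ZTM ω = u ∧ ZMY ω = s then (1:ℝ) else 0 :=
            sum_ind_fiber2' (ZTY ω) _
        _ = if M (T ω) ω = m ∧ (T ω = t ∧ ZTM ω = u ∧ ZMY ω = s) then (1:ℝ) else 0 := by
            refine if_congr ?_ rfl rfl
            constructor
            · rintro ⟨h1, h2, h3⟩
              exact ⟨by rw [h2]; exact h1, h2, h3⟩
            · rintro ⟨h1, h2, h3⟩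
              exact ⟨by rw [← h2]; exact h1, h2, h3⟩
    have hsumR : ∑ v' : V,
        Pr p (fun ω => (T ω = t ∧ ZTY ω = v') ∧ (ZTM ω = u ∧ ZMY ω = s)) =
        Pr p (fun ω => T ω = t ∧ ZTM ω = u ∧ ZMY ω = s) := by
      refine Pr_sum_eq p _ _ fun ω => ?_
      calc ∑ v' : V,
            (if (T ω = t ∧ ZTY ω = v') ∧ (ZTM ω = u ∧ ZMY ω = s) then (1:ℝ) else 0)
          = ∑ v' : V,
              (if (T ω = t ∧ ZTM ω = u ∧ ZMY ω = s) ∧ ZTY ω = v' then (1:ℝ) else 0) :=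
            Finset.sum_congr rfl fun v' _ => by refine if_congr ?_ rfl rfl; tauto
        _ = if T ω = t ∧ ZTM ω = u ∧ ZMY ω = s then (1:ℝ) else 0 :=
            sum_ind_fiber2' (ZTY ω) _
    have hcomb : Pr p (fun ω => M (T ω) ω = m ∧ (T ω = t ∧ ZTM ω = u ∧ ZMY ω = s)) =
        PrCond p (fun ω => M t ω = m) (fun ω => ZTM ω = u ∧ ZMY ω = s) *
          Pr p (fun ω => T ω = t ∧ ZTM ω = u ∧ ZMY ω = s) := by
      rw [← hsumL, Finset.sum_congr rfl fun v' _ => hfact v', ← Finset.mul_sum, hsumR]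
    have hfin : PrCond p (fun ω => M (T ω) ω = m)
          (fun ω => T ω = t ∧ ZTM ω = u ∧ ZMY ω = s) *
          Pr p (fun ω => T ω = t ∧ ZTM ω = u ∧ ZMY ω = s) =
        PrCond p (fun ω => M t ω = m) (fun ω => ZTM ω = u ∧ ZMY ω = s) *
          Pr p (fun ω => T ω = t ∧ ZTM ω = u ∧ ZMY ω = s) := by
      rw [PrCond_mul_Pr p hTtne]; exact hcomb
    exact (mul_right_cancel₀ hTtne hfin).symm
  -- assemble
  calc Ex p (fun ω => Y t (M t ω) ω *
        if (ZTM ω, ZTY ω, ZMY ω) = (u, v, s) then 1 else 0)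
      = ∑ m : 𝕄, Ex p (fun ω => (Y t m ω * if M t ω = m then 1 else 0) *
          if (ZTM ω, ZTY ω, ZMY ω) = (u, v, s) then 1 else 0) := by
        refine (Ex_sum_eq p _ _ fun ω => ?_).symm
        calc ∑ m : 𝕄, (Y t m ω * if M t ω = m then (1:ℝ) else 0) *
              (if (ZTM ω, ZTY ω, ZMY ω) = (u, v, s) then (1:ℝ) else 0)
            = (∑ m : 𝕄, Y t m ω * if M t ω = m then (1:ℝ) else 0) *
                (if (ZTM ω, ZTY ω, ZMY ω) = (u, v, s) then (1:ℝ) else 0) := by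
              rw [Finset.sum_mul]
          _ = Y t (M t ω) ω *
                (if (ZTM ω, ZTY ω, ZMY ω) = (u, v, s) then (1:ℝ) else 0) := by
              congr 1
              simp [mul_ite, mul_one, mul_zero, Finset.sum_ite_eq]
    _ = ∑ m : 𝕄, ExCond p (fun ω => Y t m ω * if M t ω = m then 1 else 0)
          (fun ω => (ZTM ω, ZTY ω, ZMY ω) = (u, v, s)) *
          Pr p (fun ω => (ZTM ω, ZTY ω, ZMY ω) = (u, v, s)) :=
        Finset.sum_congr rfl fun m _ => (ExCond_mul_Pr p hZ _).symm
    _ = ∑ m : 𝕄,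
          ExCond p (fun ω => Y (T ω) (M (T ω) ω) ω)
              (fun ω => T ω = t ∧ M (T ω) ω = m ∧ ZTY ω = v ∧ ZMY ω = s) *
            PrCond p (fun ω => M (T ω) ω = m)
              (fun ω => T ω = t ∧ ZTM ω = u ∧ ZMY ω = s) *
            Pr p (fun ω => (ZTM ω, ZTY ω, ZMY ω) = (u, v, s)) := by
        refine Finset.sum_congr rfl fun m _ => ?_
        rw [hCW t t m m (u, v, s) hzpos, hL3 m, hL4 m, hL5 m, hL6 m]

/-- identification of TE = NDE − NIE_r. -/
theorem stmt8 {Ω 𝕄 U V S : Type*}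
    [Fintype Ω] [Fintype 𝕄] [Fintype U] [Fintype V] [Fintype S]
    (p : Ω → ℝ) (hp : ∀ ω, 0 ≤ p ω) (hp1 : ∑ ω, p ω = 1)
    (T : Ω → Fin 2) (M : Fin 2 → Ω → 𝕄) (Y : Fin 2 → 𝕄 → Ω → ℝ)
    (ZTM : Ω → U) (ZTY : Ω → V) (ZMY : Ω → S)
    -- positivity
    (hpos : ∀ (t : Fin 2) (m : 𝕄) (z : U × V × S),
      0 < Pr p (fun ω => (ZTM ω, ZTY ω, ZMY ω) = z) →
      0 < Pr p (fun ω => T ω = t ∧ M (T ω) ω = m ∧ (ZTM ω, ZTY ω, ZMY ω) = z))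
    -- (i) cross-world independence given Z
    (hCW : ∀ (t t' : Fin 2) (m m' : 𝕄) (z : U × V × S),
      0 < Pr p (fun ω => (ZTM ω, ZTY ω, ZMY ω) = z) →
      ExCond p (fun ω => Y t m ω * (if M t' ω = m' then 1 else 0))
          (fun ω => (ZTM ω, ZTY ω, ZMY ω) = z) =
        ExCond p (fun ω => Y t m ω) (fun ω => (ZTM ω, ZTY ω, ZMY ω) = z) *
          PrCond p (fun ω => M t' ω = m') (fun ω => (ZTM ω, ZTY ω, ZMY ω) = z))
    -- (ii) mediator ignorability
    (hMed : ∀ (t t' : Fin 2) (m : 𝕄) (v : V) (u : U) (s : S),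
      0 < Pr p (fun ω => ZTM ω = u ∧ ZMY ω = s) →
      PrCond p (fun ω => M t ω = m ∧ T ω = t' ∧ ZTY ω = v)
          (fun ω => ZTM ω = u ∧ ZMY ω = s) =
        PrCond p (fun ω => M t ω = m) (fun ω => ZTM ω = u ∧ ZMY ω = s) *
          PrCond p (fun ω => T ω = t' ∧ ZTY ω = v) (fun ω => ZTM ω = u ∧ ZMY ω = s))
    -- (iii) outcome ignorability
    (hOut : ∀ (t t' : Fin 2) (m m' : 𝕄) (u : U) (v : V) (s : S),
      0 < Pr p (fun ω => ZTY ω = v ∧ ZMY ω = s) →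
      ExCond p
          (fun ω => Y t m ω * (if T ω = t' ∧ M (T ω) ω = m' ∧ ZTM ω = u then 1 else 0))
          (fun ω => ZTY ω = v ∧ ZMY ω = s) =
        ExCond p (fun ω => Y t m ω) (fun ω => ZTY ω = v ∧ ZMY ω = s) *
          PrCond p (fun ω => T ω = t' ∧ M (T ω) ω = m' ∧ ZTM ω = u)
            (fun ω => ZTY ω = v ∧ ZMY ω = s)) :
    Ex p (fun ω => Y 1 (M 1 ω) ω - Y 0 (M 0 ω) ω) =
      ∑ z ∈ Finset.univ.filter
          (fun z : U × V × S => 0 < Pr p (fun ω => (ZTM ω, ZTY ω, ZMY ω) = z)),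
        ∑ m : 𝕄,
          ((ExCond p (fun ω => Y (T ω) (M (T ω) ω) ω)
               (fun ω => T ω = 1 ∧ M (T ω) ω = m ∧ ZTY ω = z.2.1 ∧ ZMY ω = z.2.2) -
             ExCond p (fun ω => Y (T ω) (M (T ω) ω) ω)
               (fun ω => T ω = 0 ∧ M (T ω) ω = m ∧ ZTY ω = z.2.1 ∧ ZMY ω = z.2.2)) *
              PrCond p (fun ω => M (T ω) ω = m)
                (fun ω => T ω = 0 ∧ ZTM ω = z.1 ∧ ZMY ω = z.2.2) -
            ExCond p (fun ω => Y (T ω) (M (T ω) ω) ω)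
                (fun ω => T ω = 1 ∧ M (T ω) ω = m ∧ ZTY ω = z.2.1 ∧ ZMY ω = z.2.2) *
              (PrCond p (fun ω => M (T ω) ω = m)
                  (fun ω => T ω = 0 ∧ ZTM ω = z.1 ∧ ZMY ω = z.2.2) -
                PrCond p (fun ω => M (T ω) ω = m)
                  (fun ω => T ω = 1 ∧ ZTM ω = z.1 ∧ ZMY ω = z.2.2))) *
            Pr p (fun ω => (ZTM ω, ZTY ω, ZMY ω) = z) := by
  have hsplit : Ex p (fun ω => Y 1 (M 1 ω) ω - Y 0 (M 0 ω) ω) =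
      Ex p (fun ω => Y 1 (M 1 ω) ω) - Ex p (fun ω => Y 0 (M 0 ω) ω) := by
    unfold Ex; rw [← Finset.sum_sub_distrib]
    exact Finset.sum_congr rfl fun ω _ => by ring
  rw [hsplit, key p hp T M Y ZTM ZTY ZMY hpos hCW hMed hOut 1,
    key p hp T M Y ZTM ZTY ZMY hpos hCW hMed hOut 0, ← Finset.sum_sub_distrib]
  refine Finset.sum_congr rfl fun z hz => ?_
  rw [← Finset.sum_sub_distrib]
  refine Finset.sum_congr rfl fun m _ => ?_
  ring
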